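/- Let (X,d) be a δ-hyperbolic geodesic metric space and x, y ∈ X distinct points. Then the bisector Bis(x,y) = {z ∈ X : d(z,x) = d(z,y)} is 2δ-quasiconvex: every geodesic with endpoints in Bis(x,y) lies in the closed 2δ-neighborhood of Bis(x,y). -/
import Mathlib


/-- `s` is (the image of) a geodesic segment from `x` to `y` in a metric space. -/
def IsGeodesicSegment {X : Type*} [MetricSpace X] (s : Set X) (x y : X) : Prop :=
  ∃ f : ℝ → X, f 0 = x ∧ f (dist x y) = y ∧
    (∀ u ∈ Set.Icc (0 : ℝ) (dist x y), ∀ v ∈ Set.Icc (0 : ℝ) (dist x y),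
      dist (f u) (f v) = |u - v|) ∧
    s = f '' Set.Icc (0 : ℝ) (dist x y)

/-- A metric space is geodesic if any two points are joined by a geodesic segment. -/
def IsGeodesicSpace (X : Type*) [MetricSpace X] : Prop :=
  ∀ x y : X, ∃ s : Set X, IsGeodesicSegment s x y

private lemma bis_key {X : Type*} [MetricSpace X] (hgeo : IsGeodesicSpace X) (δ : ℝ)
    (hδ : 0 ≤ δ)
    (hslim : ∀ (a b c : X) (s₁ s₂ s₃ : Set X),
      IsGeodesicSegment s₁ a b → IsGeodesicSegment s₂ b c → IsGeodesicSegment s₃ a c →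
      ∀ p ∈ s₃, Metric.infDist p (s₁ ∪ s₂) ≤ δ)
    (x y p q : X) (hp : dist p x = dist p y) (hq : dist q x = dist q y)
    (s : Set X) (hs : IsGeodesicSegment s p q) (w : X) (hw : w ∈ s)
    (hwx : dist w y ≤ dist w x) :
    Metric.infDist w {z : X | dist z x = dist z y} ≤ 2 * δ := by
  obtain ⟨s₁, hs₁⟩ := hgeo p x
  obtain ⟨s₂, hs₂⟩ := hgeo x q
  have hin := hslim p x q s₁ s₂ s hs₁ hs₂ hs w hw
  have key : ∀ ε > (0:ℝ), Metric.infDist w {z : X | dist z x = dist z y} ≤ δ + ε := by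
    intro ε hε
    obtain ⟨f₁, hf10, hf1D, hf1iso, hs1eq⟩ := hs₁
    obtain ⟨f₂, hf20, hf2D, hf2iso, hs2eq⟩ := hs₂
    have hpmem : p ∈ s₁ ∪ s₂ :=
      Or.inl (by rw [hs1eq]; exact ⟨0, ⟨le_refl 0, dist_nonneg⟩, hf10⟩)
    have hlt : Metric.infDist w (s₁ ∪ s₂) < δ + ε := lt_of_le_of_lt hin (by linarith)
    obtain ⟨a, ha, hda⟩ := (Metric.infDist_lt_iff ⟨p, hpmem⟩).mp hlt
    -- the point `a` satisfies `dist a x ≤ dist a y`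
    have hga : dist a x ≤ dist a y := by
      rcases ha with ha | ha
      · rw [hs1eq] at ha
        obtain ⟨t, ht, rfl⟩ := ha
        have h1 : dist p (f₁ t) = t := by
          have := hf1iso 0 ⟨le_refl 0, dist_nonneg⟩ t ht
          rw [hf10] at this
          rw [this, abs_of_nonpos (by linarith [ht.1]), neg_sub, sub_zero]
        have h2 : dist (f₁ t) x = dist p x - t := by
          have := hf1iso t ht (dist p x) ⟨dist_nonneg, le_refl _⟩
          rw [hf1D] at this
          rw [this, abs_of_nonpos (by linarith [ht.2])]
          ring
        have h3 : dist p y ≤ dist p (f₁ t) + dist (f₁ t) y := dist_triangle _ _ _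
        rw [h1] at h3
        rw [h2]
        linarith
      · rw [hs2eq] at ha
        obtain ⟨t, ht, rfl⟩ := ha
        have h1 : dist x (f₂ t) = t := by
          have := hf2iso 0 ⟨le_refl 0, dist_nonneg⟩ t ht
          rw [hf20] at this
          rw [this, abs_of_nonpos (by linarith [ht.1]), neg_sub, sub_zero]
        have h2 : dist (f₂ t) q = dist x q - t := by
          have := hf2iso t ht (dist x q) ⟨dist_nonneg, le_refl _⟩
          rw [hf2D] at this
          rw [this, abs_of_nonpos (by linarith [ht.2])]
          ring
        have h3 : dist q y ≤ dist q (f₂ t) + dist (f₂ t) y := dist_triangle _ _ _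
        rw [dist_comm q (f₂ t), h2] at h3
        have h4 : dist q x = dist x q := dist_comm q x
        rw [dist_comm (f₂ t) x, h1]
        linarith
    -- geodesic from w to a; IVT gives a bisector point
    obtain ⟨s₃, f₃, hf30, hf3D, hf3iso, hs3eq⟩ := hgeo w a
    set D := dist w a with hDdef
    have hD : (0:ℝ) ≤ D := dist_nonneg
    have hlip : LipschitzOnWith 1 f₃ (Set.Icc 0 D) := by
      intro u hu v hv
      rw [edist_dist, edist_dist, hf3iso u hu v hv, Real.dist_eq]
      simp
    have hcont : ContinuousOn (fun t => dist (f₃ t) x - dist (f₃ t) y) (Set.Icc 0 D) := by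
      have hg : Continuous fun z : X => dist z x - dist z y :=
        (continuous_id.dist continuous_const).sub (continuous_id.dist continuous_const)
      exact hg.comp_continuousOn hlip.continuousOn
    have hsub : Set.Icc (dist (f₃ D) x - dist (f₃ D) y) (dist (f₃ 0) x - dist (f₃ 0) y) ⊆
        (fun t => dist (f₃ t) x - dist (f₃ t) y) '' Set.Icc 0 D :=
      intermediate_value_Icc' hD hcont
    have h0mem : (0:ℝ) ∈ Set.Icc (dist (f₃ D) x - dist (f₃ D) y)
        (dist (f₃ 0) x - dist (f₃ 0) y) := by
      constructor
      · rw [hf3D]; linarith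
      · rw [hf30]; linarith
    obtain ⟨t, ht, hgt⟩ := hsub h0mem
    have hz : f₃ t ∈ {z : X | dist z x = dist z y} := by
      simp only [Set.mem_setOf_eq]
      have : dist (f₃ t) x - dist (f₃ t) y = 0 := hgt
      linarith
    have hdwz : dist w (f₃ t) ≤ D := by
      have := hf3iso 0 ⟨le_refl 0, hD⟩ t ht
      rw [hf30] at this
      rw [this, abs_of_nonpos (by linarith [ht.1]), neg_sub, sub_zero]
      exact ht.2
    calc Metric.infDist w {z : X | dist z x = dist z y} ≤ dist w (f₃ t) :=
          Metric.infDist_le_dist_of_mem hz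
      _ ≤ D := hdwz
      _ ≤ δ + ε := le_of_lt hda
  have : Metric.infDist w {z : X | dist z x = dist z y} ≤ δ :=
    le_of_forall_pos_le_add key
  linarith

/-- Let `(X, d)` be a `δ`-hyperbolic geodesic metric space (in the sense of δ-slim
geodesic triangles) and `x ≠ y` points of `X`. Then the bisector
`Bis(x,y) = {z : d(z,x) = d(z,y)}` is `2δ`-quasiconvex: every geodesic segment with
endpoints in `Bis(x,y)` lies in the closed `2δ`-neighborhood of `Bis(x,y)`. -/
theorem bisector_quasiconvex
    {X : Type*} [MetricSpace X] (hgeo : IsGeodesicSpace X) (δ : ℝ) (hδ : 0 ≤ δ)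
    (hslim : ∀ (a b c : X) (s₁ s₂ s₃ : Set X),
      IsGeodesicSegment s₁ a b → IsGeodesicSegment s₂ b c → IsGeodesicSegment s₃ a c →
      ∀ p ∈ s₃, Metric.infDist p (s₁ ∪ s₂) ≤ δ)
    (x y : X) (hxy : x ≠ y) :
    ∀ p ∈ {z : X | dist z x = dist z y}, ∀ q ∈ {z : X | dist z x = dist z y},
      ∀ s : Set X, IsGeodesicSegment s p q →
        ∀ w ∈ s, Metric.infDist w {z : X | dist z x = dist z y} ≤ 2 * δ := by
  intro p hp q hq s hs w hw
  rcases le_total (dist w y) (dist w x) with h | h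
  · exact bis_key hgeo δ hδ hslim x y p q hp hq s hs w hw h
  · have hres := bis_key hgeo δ hδ hslim y x p q hp.symm hq.symm s hs w hw h
    have hset : {z : X | dist z y = dist z x} = {z : X | dist z x = dist z y} :=
      Set.ext fun z => eq_comm
    rwa [hset] at hres
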